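/- Let (g,B) be a finite-dimensional ε-quadratic colour Lie algebra with Cartan subalgebra h, root space decomposition, and h self-normalising. For a root α, let h_α ∈ h be the unique element with α = B(h_α,·)|_h. Then for x ∈ g^α and y ∈ g^{-α}, one has {x,y} = B(x,y) h_α. -/

import Mathlib

open scoped BigOperators TensorProduct

/-- A commutation factor on an abelian group `Γ` with values in a field `k`. -/
structure CommFactor (k : Type) [Field k] (Γ : Type) [AddCommGroup Γ] : Type where
  eps : Γ → Γ → k
  eps_symm : ∀ a b, eps a b * eps b a = 1
  eps_add_left : ∀ a b c, eps (a + b) c = eps a c * eps b c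
  eps_add_right : ∀ a b c, eps a (b + c) = eps a b * eps a c

/-- A colour Lie algebra structure on a `Γ`-graded vector space. -/
structure IsColourLie {k Γ g : Type} [Field k] [AddCommGroup Γ] [DecidableEq Γ]
    [AddCommGroup g] [Module k g]
    (ε : Γ → Γ → k) (𝒢 : Γ → Submodule k g) (br : g →ₗ[k] g →ₗ[k] g) : Prop where
  internal : DirectSum.IsInternal 𝒢
  bracket_deg : ∀ a b : Γ, ∀ x ∈ 𝒢 a, ∀ y ∈ 𝒢 b, br x y ∈ 𝒢 (a + b)
  antisymm : ∀ a b : Γ, ∀ x ∈ 𝒢 a, ∀ y ∈ 𝒢 b, br x y = -(ε a b) • br y x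
  jacobi : ∀ a b c : Γ, ∀ x ∈ 𝒢 a, ∀ y ∈ 𝒢 b, ∀ z ∈ 𝒢 c,
      ε c a • br x (br y z) + ε a b • br y (br z x) + ε b c • br z (br x y) = 0

/-- An `ε`-quadratic structure: a non-degenerate `ε`-symmetric invariant bilinear
form of degree `0` on a colour Lie algebra. -/
structure IsEpsQuadratic {k Γ g : Type} [Field k] [AddCommGroup Γ]
    [AddCommGroup g] [Module k g]
    (ε : Γ → Γ → k) (𝒢 : Γ → Submodule k g) (br : g →ₗ[k] g →ₗ[k] g)
    (B : g →ₗ[k] g →ₗ[k] k) : Prop where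
  symm : ∀ a b : Γ, ∀ x ∈ 𝒢 a, ∀ y ∈ 𝒢 b, B x y = ε a b * B y x
  deg_zero : ∀ a b : Γ, a + b ≠ 0 → ∀ x ∈ 𝒢 a, ∀ y ∈ 𝒢 b, B x y = 0
  nondeg : ∀ x : g, (∀ y : g, B x y = 0) → x = 0
  invariant : ∀ a b : Γ, ∀ x ∈ 𝒢 a, ∀ y ∈ 𝒢 b, ∀ z : g,
      B (br x y) z = -(ε a b) * B y (br x z)

/-- The root space `g^α` for the action of a Cartan subalgebra `𝔥`. -/
def rootSp {k g : Type} [Field k] [AddCommGroup g] [Module k g]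
    (𝔥 : Submodule k g) (br : g →ₗ[k] g →ₗ[k] g) (α : Module.Dual k g) :
    Submodule k g where
  carrier := {x | ∀ h ∈ 𝔥, br h x = α h • x}
  add_mem' := by
    intro x y hx hy h hh
    rw [map_add, hx h hh, hy h hh, smul_add]
  zero_mem' := by intro h hh; simp
  smul_mem' := by
    intro c x hx h hh
    rw [map_smul, hx h hh, smul_comm]

/-- The `ε`-trace of an endomorphism, computed in a homogeneous basis `e`
with degrees `d`. -/
noncomputable def trEps {k Γ g ι : Type} [Field k] [AddCommGroup Γ]
    [AddCommGroup g] [Module k g] [Fintype ι]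
    (E : CommFactor k Γ) (e : Module.Basis ι k g) (d : ι → Γ) (f : g →ₗ[k] g) : k :=
  ∑ i, E.eps (d i) (d i) * e.repr (f (e i)) i


/-! The bracket `{x, y}` has weight `α - α = 0`, so it lies in `rootSp 𝔥 br 0 = 𝔥`. By invariance of
`B`, `B({x, y}, h) = α(h) B(x, y) = B(B(x, y) h_α, h)` for every `h ∈ 𝔥`, and `B` is non-degenerate on
`𝔥`: an element of `𝔥` is `B`-orthogonal to every root space `g^γ` with `γ ≠ 0` on `𝔥` (invariance
again, since `𝔥` is abelian), so if it is also orthogonal to `𝔥 = g^0` it is orthogonal to all of `g`. -/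

namespace CommFactor

variable {k Γ : Type} [Field k] [AddCommGroup Γ] (E : CommFactor k Γ)

theorem eps_ne_zero (a b : Γ) : E.eps a b ≠ 0 :=
  left_ne_zero_of_mul_eq_one (E.eps_symm a b)

theorem eps_zero_right (c : Γ) : E.eps c 0 = 1 := by
  have h := E.eps_add_right c 0 0
  rw [add_zero, eq_comm] at h
  exact (mul_eq_left₀ (E.eps_ne_zero c 0)).mp h

theorem eps_zero_left (c : Γ) : E.eps 0 c = 1 := by
  simpa [E.eps_zero_right] using E.eps_symm 0 c

end CommFactor

section RootSpace

variable {k Γ g : Type} [Field k] [AddCommGroup Γ] [AddCommGroup g] [Module k g]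
  {E : CommFactor k Γ} {𝒢 : Γ → Submodule k g} {br : g →ₗ[k] g →ₗ[k] g}
  {B : g →ₗ[k] g →ₗ[k] k} {𝔥 : Submodule k g} {α β : Module.Dual k g} {a b : Γ} {x y : g}

theorem bracket_eq_neg_smul_of_mem_rootSp [DecidableEq Γ] (hLie : IsColourLie E.eps 𝒢 br)
    (h𝔥 : 𝔥 ≤ 𝒢 0) (hx : x ∈ rootSp 𝔥 br α) (hxa : x ∈ 𝒢 a) {h : g} (hh : h ∈ 𝔥) :
    br x h = -α h • x := by
  rw [hLie.antisymm a 0 x hxa h (h𝔥 hh), hx h hh, E.eps_zero_right, smul_smul]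
  simp

theorem bracket_mem_rootSp_add [DecidableEq Γ] (hLie : IsColourLie E.eps 𝒢 br)
    (h𝔥 : 𝔥 ≤ 𝒢 0) (hx : x ∈ rootSp 𝔥 br α) (hxa : x ∈ 𝒢 a)
    (hy : y ∈ rootSp 𝔥 br β) (hyb : y ∈ 𝒢 b) : br x y ∈ rootSp 𝔥 br (α + β) := by
  intro h hh
  have hjacobi := hLie.jacobi 0 a b h (h𝔥 hh) x hxa y hyb
  have hyx : E.eps a b • br y x = -br x y := by
    rw [hLie.antisymm a b x hxa y hyb, neg_smul, neg_neg]
  rw [E.eps_zero_right, E.eps_zero_left, one_smul, one_smul,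
    bracket_eq_neg_smul_of_mem_rootSp hLie h𝔥 hy hyb hh, hx h hh, map_smul, map_smul,
    smul_comm (E.eps a b), hyx] at hjacobi
  rw [LinearMap.add_apply]
  linear_combination (norm := module) hjacobi

theorem B_bracket_eq_mul_of_mem_rootSp [DecidableEq Γ] (hLie : IsColourLie E.eps 𝒢 br)
    (hquad : IsEpsQuadratic E.eps 𝒢 br B) (h𝔥 : 𝔥 ≤ 𝒢 0)
    (hx : x ∈ rootSp 𝔥 br α) (hxa : x ∈ 𝒢 a) (hyb : y ∈ 𝒢 b) {h : g} (hh : h ∈ 𝔥) :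
    B (br x y) h = α h * B x y := by
  rw [hquad.invariant a b x hxa y hyb h, bracket_eq_neg_smul_of_mem_rootSp hLie h𝔥 hx hxa hh,
    map_smul, smul_eq_mul, hquad.symm a b x hxa y hyb]
  ring

theorem B_eq_zero_of_mem_rootSp (hquad : IsEpsQuadratic E.eps 𝒢 br B) {w z h : g}
    {γ : Module.Dual k g} (hw : w ∈ rootSp 𝔥 br 0) (hw0 : w ∈ 𝒢 0) (hz : z ∈ rootSp 𝔥 br γ)
    (hh : h ∈ 𝔥) (hh0 : h ∈ 𝒢 0) (hγ : γ h ≠ 0) : B w z = 0 := by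
  have hinv := hquad.invariant 0 0 h hh0 w hw0 z
  rw [hw h hh, hz h hh, E.eps_zero_right] at hinv
  simp only [LinearMap.zero_apply, zero_smul, map_zero, map_smul, smul_eq_mul] at hinv
  have hγB : γ h * B w z = 0 := by linear_combination hinv
  exact (mul_eq_zero.mp hγB).resolve_left hγ

theorem eq_zero_of_forall_B_eq_zero_of_mem_cartan (hquad : IsEpsQuadratic E.eps 𝒢 br B)
    (h𝔥 : 𝔥 ≤ 𝒢 0) (hself : rootSp 𝔥 br 0 = 𝔥)
    (hdiag : (⨆ γ : Module.Dual k g, rootSp 𝔥 br γ) = ⊤) {w : g} (hw : w ∈ 𝔥)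
    (hB : ∀ h ∈ 𝔥, B w h = 0) : w = 0 := by
  have horth : ∀ γ, rootSp 𝔥 br γ ≤ LinearMap.ker (B w) := by
    intro γ z hz
    by_cases hγ : ∃ h ∈ 𝔥, γ h ≠ 0
    · obtain ⟨h, hh, hγh⟩ := hγ
      exact B_eq_zero_of_mem_rootSp hquad (hself.symm ▸ hw) (h𝔥 hw) hz hh (h𝔥 hh) hγh
    · push Not at hγ
      refine hB z (hself ▸ fun h hh => ?_)
      rw [hz h hh, hγ h hh, LinearMap.zero_apply, zero_smul]
  have hker : LinearMap.ker (B w) = ⊤ := top_le_iff.mp (hdiag ▸ iSup_le horth)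
  exact hquad.nondeg w fun z => LinearMap.mem_ker.mp (hker ▸ Submodule.mem_top)

end RootSpace

/-- For a root `α` with coroot `h_α ∈ 𝔥` (i.e. `B(h_α, ·)|_𝔥 = α`), and
`x ∈ g^α`, `y ∈ g^{-α}`, one has `{x, y} = B(x, y) h_α`. -/
theorem bracket_rootSpace_eq_coroot {k Γ g : Type} [Field k] [AddCommGroup Γ] [DecidableEq Γ]
    [AddCommGroup g] [Module k g]
    (E : CommFactor k Γ) (𝒢 : Γ → Submodule k g) (br : g →ₗ[k] g →ₗ[k] g)
    (hLie : IsColourLie E.eps 𝒢 br)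
    (B : g →ₗ[k] g →ₗ[k] k) (hquad : IsEpsQuadratic E.eps 𝒢 br B)
    (𝔥 : Submodule k g) (h𝔥 : 𝔥 ≤ 𝒢 0)
    (hself : rootSp 𝔥 br 0 = 𝔥)
    (hdiag : (⨆ γ : Module.Dual k g, rootSp 𝔥 br γ) = ⊤)
    (α : Module.Dual k g) (hα : g) (hhα : hα ∈ 𝔥)
    (hhαB : ∀ h ∈ 𝔥, B hα h = α h)
    (a b : Γ) (x : g) (hx : x ∈ rootSp 𝔥 br α) (hxh : x ∈ 𝒢 a)
    (y : g) (hy : y ∈ rootSp 𝔥 br (-α)) (hyh : y ∈ 𝒢 b) :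
    br x y = B x y • hα := by
  have hxy : br x y ∈ 𝔥 := by
    rw [← hself, ← add_neg_cancel α]
    exact bracket_mem_rootSp_add hLie h𝔥 hx hxh hy hyh
  have hdiff : br x y - B x y • hα ∈ 𝔥 := sub_mem hxy (𝔥.smul_mem _ hhα)
  refine sub_eq_zero.mp (eq_zero_of_forall_B_eq_zero_of_mem_cartan hquad h𝔥 hself hdiag hdiff ?_)
  intro h hh
  rw [map_sub, LinearMap.sub_apply, B_bracket_eq_mul_of_mem_rootSp hLie hquad h𝔥 hx hxh hyh hh,
    map_smul, LinearMap.smul_apply, hhαB h hh, smul_eq_mul, mul_comm, sub_self]
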